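/- arXiv:1211.7123 — 7 statements merged into one kernel-verified Lean document; each statement's English description precedes it below -/
import Mathlib

section
/- Let G be a group with a function L : G → ℝ. For every δ₀ ∈ CovSpec(L) and every ε > 0 there exists g ∈ G with 2δ₀ ≤ L(g) < 2δ₀ + 2ε. Equivalently, CovSpec(L) is contained in the lower semiclosure of (1/2)·L(G), i.e. every element of CovSpec(L) is the limit of a nonincreasing sequence of half-values L(g)/2. -/
/-- The δ-covering group: the subgroup of `G` generated by elements of `L`-length
less than `2δ`. -/
def piGroup {G : Type*} [Group G] (L : G → ℝ) (δ : ℝ) : Subgroup G :=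
  Subgroup.closure {g : G | L g < 2 * δ}

/-- The covering spectrum determined by the marked shift spectrum `L`. -/
def covSpec {G : Type*} [Group G] (L : G → ℝ) : Set ℝ :=
  {δ : ℝ | 0 < δ ∧ ∀ δ' > δ, piGroup L δ ≠ piGroup L δ'}

/-- The covering spectrum lies in the lower semiclosure of the half shift spectrum:
for every `δ₀` in the covering spectrum and every `ε > 0` there is `g ∈ G` with
`2δ₀ ≤ L g ∧ L g < 2δ₀ + 2ε`. -/
theorem covSpec_subset_lowerSemiclosure_half_shift {G : Type*} [Group G] (L : G → ℝ)
    {δ₀ : ℝ} (hδ₀ : δ₀ ∈ covSpec L) {ε : ℝ} (hε : 0 < ε) :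
    ∃ g : G, 2 * δ₀ ≤ L g ∧ L g < 2 * δ₀ + 2 * ε := by
  by_contra h
  push_neg at h
  apply hδ₀.2 (δ₀ + ε) (by linarith)
  unfold piGroup
  congr 1
  ext g
  constructor
  · intro hg; simp only [Set.mem_setOf_eq] at *; linarith
  · intro hg
    simp only [Set.mem_setOf_eq] at *
    by_contra h'
    exact absurd (h g (by linarith)) (by linarith)
end

section
/- Let G be a group with a function L : G → ℝ. If the image L(G) = {L(g) : g ∈ G} is a closed subset of ℝ, then for every δ ∈ CovSpec(L) there exists g ∈ G with L(g) = 2δ; that is, the covering spectrum is contained in one half of the shift spectrum. -/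
/-- If the shift spectrum (the image of `L`) is closed, then the covering spectrum
is contained in the half shift spectrum: every `δ` in the covering spectrum
satisfies `2δ = L g` for some `g ∈ G`. -/
theorem covSpec_subset_half_shift_of_closed {G : Type*} [Group G] (L : G → ℝ)
    (hclosed : IsClosed (Set.range L)) {δ : ℝ} (hδ : δ ∈ covSpec L) :
    ∃ g : G, L g = 2 * δ := by
  by_contra h
  push_neg at h
  have hmem : (2 * δ) ∈ (Set.range L)ᶜ := by
    rintro ⟨g, hg⟩; exact h g hg
  obtain ⟨ε, hε, hball⟩ := Metric.isOpen_iff.mp hclosed.isOpen_compl _ hmem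
  apply hδ.2 (δ + ε / 2) (by linarith)
  unfold piGroup
  congr 1
  ext g
  constructor
  · intro hg
    simp only [Set.mem_setOf_eq] at *
    linarith
  · intro hg
    simp only [Set.mem_setOf_eq] at *
    by_contra hge
    push_neg at hge
    have : L g ∈ Metric.ball (2 * δ) ε := by
      rw [Metric.mem_ball, Real.dist_eq, abs_lt]
      constructor <;> linarith
    exact hball this ⟨g, rfl⟩
end

section
/- Let G be a group with a function L : G → ℝ. If (δ_n) is a nonincreasing sequence of elements of CovSpec(L) converging to some δ₀ > 0, then δ₀ ∈ CovSpec(L). (The covering spectrum is a lower semiclosed subset of (0, ∞).) -/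
lemma piGroup_mono {G : Type*} [Group G] (L : G → ℝ) {a b : ℝ} (h : a ≤ b) :
    piGroup L a ≤ piGroup L b :=
  Subgroup.closure_mono (fun g hg => by
    simp only [Set.mem_setOf_eq] at hg ⊢; linarith)

/-- The covering spectrum is lower semiclosed: the limit of a nonincreasing
sequence of elements of the covering spectrum, if positive, again belongs to
the covering spectrum. -/
theorem covSpec_lowerSemiclosed {G : Type*} [Group G] (L : G → ℝ)
    (δseq : ℕ → ℝ) (hmem : ∀ n, δseq n ∈ covSpec L) (hanti : Antitone δseq)
    {δ₀ : ℝ} (hδ₀ : 0 < δ₀)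
    (hlim : Filter.Tendsto δseq Filter.atTop (nhds δ₀)) :
    δ₀ ∈ covSpec L := by
  refine ⟨hδ₀, fun δ' hδ' heq => ?_⟩
  have hle : ∀ n, δ₀ ≤ δseq n := fun n =>
    hanti.le_of_tendsto hlim n
  obtain ⟨n, hn⟩ := (hlim.eventually (gt_mem_nhds hδ')).exists
  have h1 : piGroup L δ₀ ≤ piGroup L (δseq n) := piGroup_mono L (hle n)
  have h2 : piGroup L (δseq n) ≤ piGroup L δ' := piGroup_mono L hn.le
  have : piGroup L (δseq n) = piGroup L δ' :=
    le_antisymm h2 (heq ▸ h1)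
  exact (hmem n).2 δ' hn this
end

section
/- Let X be a proper, unbounded metric space, let ℓ : X → ℝ be a continuous function with ℓ(x) > 0 for every x ∈ X, and let x₀ ∈ X. Then the rescaled length at x₀ vanishes if and only if the infinite rescaled length vanishes: inf_{x ≠ x₀} ℓ(x)/d(x, x₀) = 0 if and only if sup_{R>0} inf_{x : d(x,x₀) ≥ R} ℓ(x)/d(x, x₀) = 0. -/
/-!
On the compact ball of radius `R` about `x₀` the positive continuous function `ℓ` is bounded
below by some `m > 0`, so every `x ≠ x₀` in that ball has `ℓ x / d(x, x₀) ≥ m / R`. Ratios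
arbitrarily close to `0` must therefore come from points with `d(x, x₀) ≥ R`, for every `R`.
-/

open ENNReal

/-- The infinite rescaled length of a nonnegative (displacement) function `ℓ`,
relative to a basepoint `x₀`, valued in `[0,∞]`. -/
noncomputable def infiniteRescaledLength {X : Type*} [MetricSpace X]
    (ℓ : X → ℝ) (x₀ : X) : ℝ≥0∞ :=
  ⨆ (R : ℝ) (_ : 0 < R), ⨅ (x : X) (_ : R ≤ dist x x₀),
    ENNReal.ofReal (ℓ x / dist x x₀)

/-- The rescaled length of `ℓ` at the basepoint `x₀`, valued in `[0,∞]`. -/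
noncomputable def rescaledLength {X : Type*} [MetricSpace X]
    (ℓ : X → ℝ) (x₀ : X) : ℝ≥0∞ :=
  ⨅ (x : X) (_ : x ≠ x₀), ENNReal.ofReal (ℓ x / dist x x₀)

section RescaledLength

variable {X : Type*} [MetricSpace X] (ℓ : X → ℝ) (x₀ : X)

theorem rescaledLength_le_infiniteRescaledLength :
    rescaledLength ℓ x₀ ≤ infiniteRescaledLength ℓ x₀ :=
  le_iSup₂_of_le 1 one_pos <| le_iInf₂ fun x hx =>
    iInf₂_le (f := fun x (_ : x ≠ x₀) => ENNReal.ofReal (ℓ x / dist x x₀)) x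
      (dist_pos.1 (one_pos.trans_le hx))

theorem min_ofReal_div_iInf_tail_le_rescaledLength {m R : ℝ} (hm₀ : 0 ≤ m)
    (hm : ∀ x, dist x x₀ < R → m ≤ ℓ x) :
    min (ENNReal.ofReal (m / R))
        (⨅ (x : X) (_ : R ≤ dist x x₀), ENNReal.ofReal (ℓ x / dist x x₀)) ≤
      rescaledLength ℓ x₀ := by
  refine le_iInf₂ fun x hx => ?_
  rcases le_or_gt R (dist x x₀) with hR | hR
  · exact min_le_of_right_le (iInf₂_le x hR)
  · have hmx := hm x hR
    refine min_le_of_left_le (ENNReal.ofReal_le_ofReal ?_)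
    exact div_le_div₀ (hm₀.trans hmx) hmx (dist_pos.2 hx) hR.le

theorem infiniteRescaledLength_eq_zero_of_rescaledLength_eq_zero [ProperSpace X]
    {ℓ : X → ℝ} (hcont : Continuous ℓ) (hpos : ∀ x, 0 < ℓ x) {x₀ : X}
    (h : rescaledLength ℓ x₀ = 0) : infiniteRescaledLength ℓ x₀ = 0 := by
  refine iSup₂_eq_bot.2 fun R hR => ?_
  obtain ⟨m, hm₀, hm⟩ := (isCompact_closedBall x₀ R).exists_forall_le'
    hcont.continuousOn fun x _ => hpos x
  have hmin := min_ofReal_div_iInf_tail_le_rescaledLength ℓ x₀ hm₀.le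
    fun x hx => hm x (Metric.mem_closedBall.2 hx.le)
  rw [h, nonpos_iff_eq_zero] at hmin
  exact (min_eq_bot.1 hmin).resolve_left (ENNReal.ofReal_pos.2 (div_pos hm₀ hR)).ne'

end RescaledLength

theorem rescaledLength_eq_zero_iff_general {X : Type*} [MetricSpace X] [ProperSpace X]
    (ℓ : X → ℝ) (hcont : Continuous ℓ) (hpos : ∀ x, 0 < ℓ x) (x₀ : X) :
    rescaledLength ℓ x₀ = 0 ↔ infiniteRescaledLength ℓ x₀ = 0 :=
  ⟨infiniteRescaledLength_eq_zero_of_rescaledLength_eq_zero hcont hpos,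
    fun h => nonpos_iff_eq_zero.1 (h ▸ rescaledLength_le_infiniteRescaledLength ℓ x₀)⟩

/-- On a proper unbounded metric space, for a continuous everywhere-positive
displacement function `ℓ`, the rescaled length at a basepoint vanishes iff the
infinite rescaled length vanishes. -/
theorem rescaledLength_eq_zero_iff {X : Type*} [MetricSpace X] [ProperSpace X]
    (hub : ∀ (p : X) (R : ℝ), ∃ x : X, R ≤ dist x p)
    (ℓ : X → ℝ) (hcont : Continuous ℓ) (hpos : ∀ x, 0 < ℓ x) (x₀ : X) :
    rescaledLength ℓ x₀ = 0 ↔ infiniteRescaledLength ℓ x₀ = 0 :=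
  rescaledLength_eq_zero_iff_general ℓ hcont hpos x₀
end

section
/- Let Y be a proper metric space and K ⊆ Y a compact set. Suppose for each j ∈ ℕ there is a real number a_j > 0 and a map c_j : [−a_j, a_j] → Y which is an isometric embedding (d(c_j(s), c_j(t)) = |s − t| for all s, t ∈ [−a_j, a_j]) with c_j(0) ∈ K, and a_j → ∞. Then Y contains a line: there is a map c : ℝ → Y with d(c(s), c(t)) = |s − t| for all s, t ∈ ℝ. (This is the core of the theorem that if infinitely many elements of the fundamental group have their translative lengths achieved in a common compact set, then the universal cover contains a line: the minimal axes of those deck transformations are minimizing geodesic segments of lengths tending to infinity, centered in a fixed compact set.) -/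
/-- If a proper metric space contains unit-speed minimizing geodesic segments
`c_j : [-a_j, a_j] → Y` of half-lengths `a_j → ∞`, all centered in a fixed
compact set `K`, then the space contains a line (an isometric embedding of `ℝ`). -/
theorem exists_line_of_longer_and_longer_segments {Y : Type*} [MetricSpace Y]
    [ProperSpace Y] (K : Set Y) (hK : IsCompact K)
    (a : ℕ → ℝ) (ha : ∀ j, 0 < a j)
    (c : ℕ → ℝ → Y)
    (hiso : ∀ j, ∀ s ∈ Set.Icc (-(a j)) (a j), ∀ t ∈ Set.Icc (-(a j)) (a j),
      dist (c j s) (c j t) = |s - t|)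
    (hc0 : ∀ j, c j 0 ∈ K)
    (hainf : Filter.Tendsto a Filter.atTop Filter.atTop) :
    ∃ γ : ℝ → Y, ∀ s t : ℝ, dist (γ s) (γ t) = |s - t| := by
  obtain ⟨F, hF⟩ := Filter.exists_ultrafilter_le (Filter.atTop : Filter ℕ)
  have hev : ∀ t : ℝ, ∀ᶠ j in (F : Filter ℕ), |t| ≤ a j := fun t =>
    hF (hainf.eventually_ge_atTop |t|)
  have hIcc : ∀ (t : ℝ) (j : ℕ), |t| ≤ a j → t ∈ Set.Icc (-(a j)) (a j) := by
    intro t j hj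
    constructor <;> cases abs_cases t <;> linarith
  have hmem : ∀ t : ℝ, ∀ᶠ j in (F : Filter ℕ), c j t ∈ Metric.cthickening |t| K := by
    intro t
    filter_upwards [hev t] with j hj
    have h0 : (0 : ℝ) ∈ Set.Icc (-(a j)) (a j) := ⟨by linarith [ha j], (ha j).le⟩
    have hd : dist (c j t) (c j 0) = |t| := by
      simpa using hiso j t (hIcc t j hj) 0 h0
    exact Metric.mem_cthickening_of_dist_le _ _ _ _ (hc0 j) hd.le
  have hlim : ∀ t : ℝ, ∃ y, Filter.Tendsto (fun j => c j t) F (nhds y) := by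
    intro t
    obtain ⟨y, -, hy⟩ := (hK.cthickening (r := |t|)).ultrafilter_le_nhds
      (F.map (fun j => c j t))
      (by rw [Ultrafilter.coe_map, Filter.le_principal_iff, Filter.mem_map]; exact hmem t)
    exact ⟨y, hy⟩
  choose γ hγ using hlim
  refine ⟨γ, fun s t => ?_⟩
  have h1 : Filter.Tendsto (fun j => dist (c j s) (c j t)) F
      (nhds (dist (γ s) (γ t))) := (hγ s).dist (hγ t)
  have h2 : ∀ᶠ j in (F : Filter ℕ), dist (c j s) (c j t) = |s - t| := by
    filter_upwards [hev s, hev t] with j hjs hjt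
    exact hiso j s (hIcc s j hjs) t (hIcc t j hjt)
  exact tendsto_nhds_unique h1 (by rw [Filter.tendsto_congr' h2]; exact tendsto_const_nhds)
end

section
/- Let f, h : ℝ → ℝ with f twice continuously differentiable on [0, ∞) and h continuously differentiable on [0, ∞). Assume h(0) = 0, h(r) > 0 for all r > 0, f'(0) = 0, and f''(r)·h(r) + 2·f'(r)·h'(r) < 0 for every r > 0. Then f'(r) < 0 for every r > 0. (In particular, for a warped product metric dr² + h²(r) g_{S²} + f²(r) g_{S¹} on S¹ × ℝ³ with f > 0, positivity of the Ricci curvature in the S¹ direction means f''/f + 2 f' h'/(f h) < 0 for r > 0, and hence forces f to be strictly decreasing on (0, ∞).) -/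
open Set

/-! The quantity `f' h²` has derivative `h (f'' h + 2 f' h')`, which is negative for `r > 0`.
So `f' h²` strictly decreases from its value `0` at `r = 0`, and since `h² > 0` on `(0, ∞)`
this forces `f' < 0` there. -/

theorem hasDerivAt_mul_sq {u v : ℝ → ℝ} {u' v' x : ℝ} (hu : HasDerivAt u u' x)
    (hv : HasDerivAt v v' x) :
    HasDerivAt (fun y => u y * v y ^ 2) (v x * (u' * v x + 2 * u x * v')) x :=
  (hu.mul (hv.fun_pow 2)).congr_deriv (by ring)

theorem strictAntiOn_mul_sq_Ici {u u' v v' : ℝ → ℝ} {a : ℝ}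
    (hu : ∀ r ∈ Ici a, HasDerivAt u (u' r) r) (hv : ∀ r ∈ Ici a, HasDerivAt v (v' r) r)
    (hvpos : ∀ r, a < r → 0 < v r) (hneg : ∀ r, a < r → u' r * v r + 2 * u r * v' r < 0) :
    StrictAntiOn (fun r => u r * v r ^ 2) (Ici a) := by
  have hderiv : ∀ r ∈ Ici a, HasDerivAt (fun y => u y * v y ^ 2)
      (v r * (u' r * v r + 2 * u r * v' r)) r :=
    fun r hr => hasDerivAt_mul_sq (hu r hr) (hv r hr)
  refine strictAntiOn_of_hasDerivWithinAt_neg (convex_Ici a)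
    (fun r hr => (hderiv r hr).continuousAt.continuousWithinAt)
    (fun r hr => (hderiv r (interior_subset hr)).hasDerivWithinAt) fun r hr => ?_
  rw [interior_Ici] at hr
  exact mul_neg_of_pos_of_neg (hvpos r hr) (hneg r hr)

theorem deriv_neg_of_warped_ricci_pos_general
    (f' f'' h h' : ℝ → ℝ)
    (hf'deriv : ∀ r ∈ Ici (0 : ℝ), HasDerivAt f' (f'' r) r)
    (hhderiv : ∀ r ∈ Ici (0 : ℝ), HasDerivAt h (h' r) r)
    (hhpos : ∀ r : ℝ, 0 < r → 0 < h r)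
    (hf'0 : f' 0 = 0)
    (hricci : ∀ r : ℝ, 0 < r → f'' r * h r + 2 * f' r * h' r < 0) :
    ∀ r : ℝ, 0 < r → f' r < 0 := by
  intro r hr
  have hanti := strictAntiOn_mul_sq_Ici hf'deriv hhderiv hhpos hricci
  have hneg : f' r * h r ^ 2 < 0 := by
    simpa [hf'0] using hanti self_mem_Ici hr.le hr
  exact neg_of_mul_neg_left hneg (sq_nonneg _)

/-- The analytic core of the proposition that a warped product metric
`dr² + h²(r) g_{S²} + f²(r) g_{S¹}` with positive Ricci curvature forces `f` to be
strictly decreasing: if `h(0) = 0`, `h > 0` on `(0,∞)`, `f'(0) = 0`, and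
`f''(r) h(r) + 2 f'(r) h'(r) < 0` for all `r > 0` (the Ricci positivity condition
in the circle direction, cleared of the positive denominator `f h`), then
`f'(r) < 0` for all `r > 0`. -/
theorem deriv_neg_of_warped_ricci_pos
    (f f' f'' h h' : ℝ → ℝ)
    (hfderiv : ∀ r ∈ Ici (0 : ℝ), HasDerivAt f (f' r) r)
    (hf'deriv : ∀ r ∈ Ici (0 : ℝ), HasDerivAt f' (f'' r) r)
    (hf''cont : ContinuousOn f'' (Ici (0 : ℝ)))
    (hhderiv : ∀ r ∈ Ici (0 : ℝ), HasDerivAt h (h' r) r)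
    (hh'cont : ContinuousOn h' (Ici (0 : ℝ)))
    (hh0 : h 0 = 0) (hhpos : ∀ r : ℝ, 0 < r → 0 < h r)
    (hf'0 : f' 0 = 0)
    (hricci : ∀ r : ℝ, 0 < r → f'' r * h r + 2 * f' r * h' r < 0) :
    ∀ r : ℝ, 0 < r → f' r < 0 :=
  deriv_neg_of_warped_ricci_pos_general f' f'' h h' hf'deriv hhderiv hhpos hf'0 hricci
end

section
/- For all complex numbers z₃, z₄ ∈ ℂ and every θ ∈ ℝ: |e^{iθ}·conj(z₄) − z₃|² + |e^{i(π+θ)}·conj(z₃) − z₄|² ≥ (1/2)·(|z₃| + |z₄|)², and consequently the left-hand side is at least (1/2)·(|z₃|² + |z₄|²). (This is the key displacement estimate showing that in Wilking's example M⁶ = (S³ × ℝ⁴)/Pin(2), the displacement of the nontrivial deck transformation at the point [(z₁, z₂, z₃, z₄)] is at least (√2/2)·√(|z₃|² + |z₄|²), so that the infinite rescaled covering spectrum of M⁶ is nontrivial.) -/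
/-!
Writing `w = e^{iθ}`, the second rotation is `e^{i(π+θ)} = -w`, and expanding both squares the
cross terms `∓ 2 Re (w z̄₃ z̄₄)` cancel, so the left-hand side equals `(1 + |w|²)(|z₃|² + |z₄|²)
= 2(|z₃|² + |z₄|²)`, independently of `θ`. Both bounds then follow from `(a + b)² ≤ 2(a² + b²)`.
-/

open Complex ComplexConjugate

theorem norm_mul_conj_sub_sq_add_norm_mul_conj_add_sq (w z₃ z₄ : ℂ) :
    ‖w * conj z₄ - z₃‖ ^ 2 + ‖w * conj z₃ + z₄‖ ^ 2 =
      (1 + ‖w‖ ^ 2) * (‖z₃‖ ^ 2 + ‖z₄‖ ^ 2) := by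
  simp only [Complex.sq_norm, normSq_sub, normSq_add, normSq_mul, normSq_conj]
  have cross_terms_agree : (w * conj z₄ * conj z₃).re = (w * conj z₃ * conj z₄).re := by
    ring_nf
  rw [cross_terms_agree]
  ring

theorem exp_ofReal_pi_add_mul_I (θ : ℝ) :
    exp ((Real.pi + θ) * I) = -exp (θ * I) := by
  rw [add_mul, add_comm, exp_add_pi_mul_I]

/-- The key displacement estimate in Wilking's example
`M⁶ = (S³ × ℝ⁴)/Pin(2)`: for all `z₃ z₄ ∈ ℂ` and `θ ∈ ℝ`,
`|e^{iθ} z̄₄ − z₃|² + |e^{i(π+θ)} z̄₃ − z₄|² ≥ (1/2)(|z₃| + |z₄|)²`, and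
consequently the left-hand side is at least `(1/2)(|z₃|² + |z₄|²)`. -/
theorem wilking_displacement_estimate (z₃ z₄ : ℂ) (θ : ℝ) :
    (1 / 2) * (‖z₃‖ + ‖z₄‖) ^ 2 ≤
        ‖Complex.exp (θ * Complex.I) * (starRingEnd ℂ) z₄ - z₃‖ ^ 2 +
          ‖Complex.exp ((Real.pi + θ) * Complex.I) * (starRingEnd ℂ) z₃ - z₄‖ ^ 2 ∧
      (1 / 2) * (‖z₃‖ ^ 2 + ‖z₄‖ ^ 2) ≤
        ‖Complex.exp (θ * Complex.I) * (starRingEnd ℂ) z₄ - z₃‖ ^ 2 +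
          ‖Complex.exp ((Real.pi + θ) * Complex.I) * (starRingEnd ℂ) z₃ - z₄‖ ^ 2 := by
  have displacement_sq :
      ‖exp (θ * I) * conj z₄ - z₃‖ ^ 2 + ‖exp ((Real.pi + θ) * I) * conj z₃ - z₄‖ ^ 2 =
        2 * (‖z₃‖ ^ 2 + ‖z₄‖ ^ 2) := by
    rw [exp_ofReal_pi_add_mul_I, neg_mul, ← neg_add', norm_neg,
      norm_mul_conj_sub_sq_add_norm_mul_conj_add_sq, norm_exp_ofReal_mul_I]
    ring
  rw [displacement_sq]
  constructor
  · nlinarith [sq_nonneg (‖z₃‖ - ‖z₄‖)]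
  · nlinarith [sq_nonneg ‖z₃‖, sq_nonneg ‖z₄‖]
end
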